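/- arXiv:1804.02548 — 2 statements merged into one kernel-verified Lean document; each statement's English description precedes it below -/
import Mathlib

section
/- Every finite subgroup of an HNN extension is conjugate to a finite subgroup of its base group: if G* is the HNN extension of a group G relative to an isomorphism φ : A → B between subgroups A, B ≤ G, then for every finite subgroup H of G* there exists an element x ∈ G* such that x H x⁻¹ is contained in (the canonical image of) G. -/
/-!
The Britton length of `x` (the number of letters `t^±1` in a reduced word for `x`) is the
distance from the vertex `G` to the vertex `xG` of the Bass–Serre tree. Geodesics from the base
vertex leave it along a unique edge, which gives tripods and hence Gromov's four-point condition.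
For a finite subgroup `H`, let `m` be the midpoint of a geodesic between two points of the orbit
`H` at maximal distance `D`; the four-point condition puts every point of the orbit within
`⌈D/2⌉` of `m`, and then shows that each `h ∈ H` moves `m` by at most one edge. An element of `G`
has `t`-exponent sum `0` while the length has the parity of the exponent sum, so no element
inverts an edge: `H` fixes `m`, that is `m⁻¹ H m ≤ G`.
-/

open Multiplicative

/-- `ℓ x` models the distance from a vertex `v` to `x • v` for an action of `Γ` on a simplicial
tree with `K` the stabiliser of `v`. Thus `ℓ s = 1` says that `s • v` is a neighbour of `v`, and
`ℓ m + ℓ (m⁻¹ * x) = ℓ x` that `m • v` lies on the geodesic from `v` to `x • v`; `step_unique`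
says that this geodesic leaves `v` along a unique edge, and the homomorphism `σ` rules out
elements inverting an edge. -/
structure IsTreeLength {Γ : Type*} [Group Γ] (K : Subgroup Γ) (ℓ : Γ → ℕ) : Prop where
  eq_zero_iff (x : Γ) : ℓ x = 0 ↔ x ∈ K
  inv (x : Γ) : ℓ x⁻¹ = ℓ x
  mul_le (x y : Γ) : ℓ (x * y) ≤ ℓ x + ℓ y
  exists_step (x : Γ) : ℓ x ≠ 0 → ∃ s, ℓ s = 1 ∧ ℓ (s⁻¹ * x) + 1 = ℓ x
  step_unique (s s' x : Γ) : ℓ s = 1 → ℓ s' = 1 → ℓ (s⁻¹ * x) < ℓ x → ℓ (s'⁻¹ * x) < ℓ x →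
    s⁻¹ * s' ∈ K
  exists_parity : ∃ σ : Γ →* Multiplicative ℤ, K ≤ σ.ker ∧ ∀ x, (ℓ x : ℤ) ≡ toAdd (σ x) [ZMOD 2]

namespace IsTreeLength

variable {Γ : Type*} [Group Γ] {K : Subgroup Γ} {ℓ : Γ → ℕ}

theorem len_of_mem (hℓ : IsTreeLength K ℓ) {k : Γ} (hk : k ∈ K) : ℓ k = 0 :=
  (hℓ.eq_zero_iff k).2 hk

theorem len_one (hℓ : IsTreeLength K ℓ) : ℓ 1 = 0 :=
  hℓ.len_of_mem K.one_mem

theorem len_mul_of_mem (hℓ : IsTreeLength K ℓ) {k : Γ} (hk : k ∈ K) (x : Γ) :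
    ℓ (k * x) = ℓ x :=
  le_antisymm (by simpa [hℓ.len_of_mem hk] using hℓ.mul_le k x)
    (by simpa [hℓ.len_of_mem (K.inv_mem hk)] using hℓ.mul_le k⁻¹ (k * x))

theorem len_inv_mul_comm (hℓ : IsTreeLength K ℓ) (x y : Γ) : ℓ (x⁻¹ * y) = ℓ (y⁻¹ * x) := by
  rw [← hℓ.inv, mul_inv_rev, inv_inv]

theorem le_len_add_len_inv_mul (hℓ : IsTreeLength K ℓ) (s x : Γ) : ℓ x ≤ ℓ s + ℓ (s⁻¹ * x) := by
  simpa using hℓ.mul_le s (s⁻¹ * x)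

theorem len_mul_ne (hℓ : IsTreeLength K ℓ) {s : Γ} (hs : ℓ s = 1) (x : Γ) : ℓ (s * x) ≠ ℓ x := by
  obtain ⟨σ, -, hσ⟩ := hℓ.exists_parity
  have hsx := hσ (s * x)
  have hs' := hσ s
  have hx := hσ x
  rw [map_mul, toAdd_mul] at hsx
  rw [hs] at hs'
  simp only [Int.ModEq] at hsx hs' hx
  omega

theorem len_inv_mul_add_one_of_lt (hℓ : IsTreeLength K ℓ) {s x : Γ} (hs : ℓ s = 1)
    (hx : ℓ (s⁻¹ * x) < ℓ x) : ℓ (s⁻¹ * x) + 1 = ℓ x := by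
  have := hℓ.le_len_add_len_inv_mul s x
  omega

theorem len_inv_mul_eq_add_one_of_le (hℓ : IsTreeLength K ℓ) {s x : Γ} (hs : ℓ s = 1)
    (hx : ℓ x ≤ ℓ (s⁻¹ * x)) : ℓ (s⁻¹ * x) = ℓ x + 1 := by
  have hs' : ℓ s⁻¹ = 1 := by rw [hℓ.inv, hs]
  have := hℓ.mul_le s⁻¹ x
  have := hℓ.len_mul_ne hs' x
  omega

theorem exists_len_eq_and_len_inv_mul_add (hℓ : IsTreeLength K ℓ) (x : Γ) {r : ℕ}
    (hr : r ≤ ℓ x) : ∃ m, ℓ m = r ∧ ℓ (m⁻¹ * x) + r = ℓ x := by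
  induction r with
  | zero => exact ⟨1, hℓ.len_one, by simp⟩
  | succ r ih =>
    obtain ⟨m, hm, hmx⟩ := ih (by omega)
    obtain ⟨s, hs, hsx⟩ := hℓ.exists_step (m⁻¹ * x) (by omega)
    have hx := hℓ.le_len_add_len_inv_mul (m * s) x
    have hms := hℓ.mul_le m s
    rw [show (m * s)⁻¹ * x = s⁻¹ * (m⁻¹ * x) by group] at hx
    refine ⟨m * s, by omega, ?_⟩
    rw [show (m * s)⁻¹ * x = s⁻¹ * (m⁻¹ * x) by group]
    omega

/-- If `y` does not leave the base point along the first edge `s` of `x`, the geodesics to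
`x` and to `y` only meet at the base point. -/
theorem len_inv_mul_eq_add (hℓ : IsTreeLength K ℓ) {s x y : Γ} (hs : ℓ s = 1)
    (hx : ℓ (s⁻¹ * x) < ℓ x) (hy : ℓ y ≤ ℓ (s⁻¹ * y)) : ℓ (x⁻¹ * y) = ℓ x + ℓ y := by
  obtain ⟨n, hn⟩ : ∃ n, ℓ (s⁻¹ * x) = n := ⟨_, rfl⟩
  induction n generalizing s x y with
  | zero =>
    have hy' := hℓ.len_inv_mul_eq_add_one_of_le hs hy
    have hx' := hℓ.len_inv_mul_add_one_of_lt hs hx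
    rw [show x⁻¹ * y = (s⁻¹ * x)⁻¹ * (s⁻¹ * y) by group,
      hℓ.len_mul_of_mem (K.inv_mem ((hℓ.eq_zero_iff _).1 hn))]
    omega
  | succ n ih =>
    have hy' := hℓ.len_inv_mul_eq_add_one_of_le hs hy
    have hx' := hℓ.len_inv_mul_add_one_of_lt hs hx
    obtain ⟨s', hs', hs'x⟩ := hℓ.exists_step (s⁻¹ * x) (by omega)
    have hs'y : ℓ (s⁻¹ * y) ≤ ℓ (s'⁻¹ * (s⁻¹ * y)) := by
      by_contra! hlt
      have hss' := hℓ.step_unique s⁻¹ s' (s⁻¹ * y) (by rw [hℓ.inv, hs]) hs'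
        (by rw [inv_inv, mul_inv_cancel_left]; omega) hlt
      rw [show s'⁻¹ * (s⁻¹ * x) = (s⁻¹⁻¹ * s')⁻¹ * x by group,
        hℓ.len_mul_of_mem (K.inv_mem hss')] at hs'x
      omega
    have := ih (x := s⁻¹ * x) (y := s⁻¹ * y) hs' (by omega) hs'y (by omega)
    rw [show (s⁻¹ * x)⁻¹ * (s⁻¹ * y) = x⁻¹ * y by group] at this
    omega

theorem len_mul_eq_add_of_onGeodesic (hℓ : IsTreeLength K ℓ) {s m z : Γ}
    (hm : ℓ m + ℓ (m⁻¹ * z) = ℓ z) (hz : ℓ (s * z) = ℓ s + ℓ z) : ℓ (s * m) = ℓ s + ℓ m := by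
  have h₁ := hℓ.mul_le s m
  have h₂ := hℓ.mul_le (s * m) (m⁻¹ * z)
  rw [show s * m * (m⁻¹ * z) = s * z by group] at h₂
  omega

theorem exists_tripod (hℓ : IsTreeLength K ℓ) (x y : Γ) :
    ∃ m, ℓ m + ℓ (m⁻¹ * x) = ℓ x ∧ ℓ m + ℓ (m⁻¹ * y) = ℓ y ∧
      ℓ (x⁻¹ * y) = ℓ (m⁻¹ * x) + ℓ (m⁻¹ * y) := by
  obtain ⟨n, hn⟩ : ∃ n, ℓ x = n := ⟨_, rfl⟩
  induction n generalizing x y with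
  | zero =>
    refine ⟨1, by simp [hℓ.len_one], by simp [hℓ.len_one], ?_⟩
    rw [hℓ.len_mul_of_mem (K.inv_mem ((hℓ.eq_zero_iff x).1 hn))]
    simp [hn]
  | succ n ih =>
    obtain ⟨s, hs, hsx⟩ := hℓ.exists_step x (by omega)
    by_cases hy : ℓ (s⁻¹ * y) < ℓ y
    · have hsy := hℓ.len_inv_mul_add_one_of_lt hs hy
      obtain ⟨m, hmx, hmy, hxy⟩ := ih (s⁻¹ * x) (s⁻¹ * y) (by omega)
      have hsm := hℓ.len_mul_eq_add_of_onGeodesic hmy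
        (by rw [mul_inv_cancel_left, hs]; omega)
      refine ⟨s * m, ?_, ?_, ?_⟩ <;>
        simp only [mul_inv_rev, mul_assoc, inv_mul_cancel_left] at hmx hmy hxy ⊢ <;> omega
    · have := hℓ.len_inv_mul_eq_add (x := x) (y := y) hs (by omega) (by omega)
      exact ⟨1, by simp [hℓ.len_one], by simp [hℓ.len_one], by simpa⟩

theorem len_inv_mul_lt_of_onGeodesic (hℓ : IsTreeLength K ℓ) {s m y : Γ}
    (hs : ℓ (s⁻¹ * m) < ℓ m) (hm : ℓ m + ℓ (m⁻¹ * y) = ℓ y) : ℓ (s⁻¹ * y) < ℓ y := by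
  have := hℓ.mul_le (s⁻¹ * m) (m⁻¹ * y)
  rw [show s⁻¹ * m * (m⁻¹ * y) = s⁻¹ * y by group] at this
  omega

theorem onGeodesic_of_onGeodesic (hℓ : IsTreeLength K ℓ) {m₁ m₂ y : Γ}
    (h₁ : ℓ m₁ + ℓ (m₁⁻¹ * y) = ℓ y) (h₂ : ℓ m₂ + ℓ (m₂⁻¹ * y) = ℓ y) (hle : ℓ m₁ ≤ ℓ m₂) :
    ℓ m₁ + ℓ (m₁⁻¹ * m₂) = ℓ m₂ := by
  obtain ⟨n, hn⟩ : ∃ n, ℓ m₁ = n := ⟨_, rfl⟩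
  induction n generalizing m₁ m₂ y with
  | zero => rw [hℓ.len_mul_of_mem (K.inv_mem ((hℓ.eq_zero_iff m₁).1 hn)), hn, zero_add]
  | succ n ih =>
    obtain ⟨s, hs, hsm₁⟩ := hℓ.exists_step m₁ (by omega)
    obtain ⟨s', hs', hs'm₂⟩ := hℓ.exists_step m₂ (by omega)
    have hsy := hℓ.len_inv_mul_lt_of_onGeodesic (by omega : ℓ (s⁻¹ * m₁) < ℓ m₁) h₁
    have hs'y := hℓ.len_inv_mul_lt_of_onGeodesic (by omega : ℓ (s'⁻¹ * m₂) < ℓ m₂) h₂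
    -- both geodesics leave the base point along the same edge
    have hsm₂ : ℓ (s⁻¹ * m₂) = ℓ (s'⁻¹ * m₂) := by
      rw [show s⁻¹ * m₂ = (s⁻¹ * s') * (s'⁻¹ * m₂) by group,
        hℓ.len_mul_of_mem (hℓ.step_unique s s' y hs hs' hsy hs'y)]
    have hsy' := hℓ.len_inv_mul_add_one_of_lt hs hsy
    have key := ih (m₁ := s⁻¹ * m₁) (m₂ := s⁻¹ * m₂) (y := s⁻¹ * y)
    simp only [mul_inv_rev, inv_inv, mul_assoc, mul_inv_cancel_left] at key
    have := key (by omega) (by omega) (by omega) (by omega)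
    omega

theorem len_add_len_inv_mul_le_of_tripods (hℓ : IsTreeLength K ℓ) {y z w m₁ m₂ : Γ}
    (hm₁y : ℓ m₁ + ℓ (m₁⁻¹ * y) = ℓ y) (hm₁z : ℓ m₁ + ℓ (m₁⁻¹ * z) = ℓ z)
    (hyz : ℓ (y⁻¹ * z) = ℓ (m₁⁻¹ * y) + ℓ (m₁⁻¹ * z))
    (hm₂y : ℓ m₂ + ℓ (m₂⁻¹ * y) = ℓ y) (hm₂w : ℓ m₂ + ℓ (m₂⁻¹ * w) = ℓ w)
    (hle : ℓ m₁ ≤ ℓ m₂) : ℓ y + ℓ (z⁻¹ * w) ≤ ℓ w + ℓ (y⁻¹ * z) := by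
  have h₁₂ := hℓ.onGeodesic_of_onGeodesic hm₁y hm₂y hle
  have h₁ := hℓ.mul_le (z⁻¹ * m₁) (m₁⁻¹ * m₂)
  have h₂ := hℓ.mul_le (z⁻¹ * m₁ * (m₁⁻¹ * m₂)) (m₂⁻¹ * w)
  rw [show z⁻¹ * m₁ * (m₁⁻¹ * m₂) * (m₂⁻¹ * w) = z⁻¹ * w by group] at h₂
  rw [hℓ.len_inv_mul_comm z m₁] at h₁
  omega

theorem len_add_len_inv_mul_le_max (hℓ : IsTreeLength K ℓ) (y z w : Γ) :
    ℓ y + ℓ (z⁻¹ * w) ≤ max (ℓ z + ℓ (y⁻¹ * w)) (ℓ w + ℓ (y⁻¹ * z)) := by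
  obtain ⟨m₁, hm₁y, hm₁z, hyz⟩ := hℓ.exists_tripod y z
  obtain ⟨m₂, hm₂y, hm₂w, hyw⟩ := hℓ.exists_tripod y w
  rcases le_total (ℓ m₁) (ℓ m₂) with hle | hle
  · exact le_max_of_le_right (hℓ.len_add_len_inv_mul_le_of_tripods hm₁y hm₁z hyz hm₂y hm₂w hle)
  · rw [hℓ.len_inv_mul_comm z w]
    exact le_max_of_le_left (hℓ.len_add_len_inv_mul_le_of_tripods hm₂y hm₂w hyw hm₁y hm₁z hle)

theorem four_point (hℓ : IsTreeLength K ℓ) (p q r s : Γ) :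
    ℓ (p⁻¹ * q) + ℓ (r⁻¹ * s) ≤
      max (ℓ (p⁻¹ * r) + ℓ (q⁻¹ * s)) (ℓ (p⁻¹ * s) + ℓ (q⁻¹ * r)) := by
  simpa only [mul_inv_rev, inv_inv, mul_assoc, mul_inv_cancel_left] using
    hℓ.len_add_len_inv_mul_le_max (p⁻¹ * q) (p⁻¹ * r) (p⁻¹ * s)

/-- The midpoint of a diametral pair of `F` is a center of `F`. -/
theorem exists_two_mul_len_inv_mul_le (hℓ : IsTreeLength K ℓ) {F : Set Γ} {a b : Γ}
    (ha : a ∈ F) (hb : b ∈ F) (hab : ∀ x ∈ F, ∀ y ∈ F, ℓ (x⁻¹ * y) ≤ ℓ (a⁻¹ * b)) :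
    ∃ m, ∀ x ∈ F, 2 * ℓ (x⁻¹ * m) ≤ ℓ (a⁻¹ * b) + 1 := by
  obtain ⟨m, hm, hmb⟩ := hℓ.exists_len_eq_and_len_inv_mul_add (a⁻¹ * b)
    (r := (ℓ (a⁻¹ * b) + 1) / 2) (by omega)
  refine ⟨a * m, fun x hx => ?_⟩
  have h := hℓ.four_point x (a * m) a b
  rw [show (a * m)⁻¹ * b = m⁻¹ * (a⁻¹ * b) by group, show (a * m)⁻¹ * a = m⁻¹ by group,
    hℓ.inv] at h
  have := hab x hx a ha
  have := hab x hx b hb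
  have := h.trans (max_le (by omega : _ ≤ ℓ (a⁻¹ * b) + ℓ m) (by omega))
  omega

theorem exists_len_conj_le_one (hℓ : IsTreeLength K ℓ) {H : Subgroup Γ}
    (hH : (H : Set Γ).Finite) : ∃ m, ∀ h ∈ H, ℓ (m⁻¹ * h * m) ≤ 1 := by
  obtain ⟨⟨a, b⟩, ⟨ha, hb⟩, hab⟩ := Set.exists_max_image ((H : Set Γ) ×ˢ (H : Set Γ))
    (fun p => ℓ (p.1⁻¹ * p.2)) (hH.prod hH) ⟨(1, 1), H.one_mem, H.one_mem⟩
  obtain ⟨m, hm⟩ := hℓ.exists_two_mul_len_inv_mul_le (a := a) (b := b) ha hb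
    fun x hx y hy => hab (x, y) ⟨hx, hy⟩
  refine ⟨m, fun h hh => ?_⟩
  rw [mul_assoc]
  have h₄ := hℓ.four_point a b m (h * m)
  have ha' := hm a ha
  have hb' := hm b hb
  have hha := hm (h⁻¹ * a) (H.mul_mem (H.inv_mem hh) ha)
  have hhb := hm (h⁻¹ * b) (H.mul_mem (H.inv_mem hh) hb)
  rw [show (h⁻¹ * a)⁻¹ * m = a⁻¹ * (h * m) by group] at hha
  rw [show (h⁻¹ * b)⁻¹ * m = b⁻¹ * (h * m) by group] at hhb
  have := h₄.trans (max_le (by omega : _ ≤ ℓ (a⁻¹ * b) + 1) (by omega))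
  omega

/-- No element inverts an edge at the base point. -/
theorem mem_of_len_le_one_of_len_mul_self_le_one (hℓ : IsTreeLength K ℓ) {q : Γ}
    (hq : ℓ q ≤ 1) (hqq : ℓ (q * q) ≤ 1) : q ∈ K := by
  obtain ⟨σ, hσK, hσ⟩ := hℓ.exists_parity
  have h₁ := hσ q
  have h₂ := hσ (q * q)
  rw [map_mul, toAdd_mul] at h₂
  have hqq₀ : ℓ (q * q) = 0 := by simp only [Int.ModEq] at h₂; omega
  have hσq : toAdd (σ q) + toAdd (σ q) = 0 := by
    rw [← toAdd_mul, ← map_mul, hσK ((hℓ.eq_zero_iff _).1 hqq₀), toAdd_one]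
  rw [← hℓ.eq_zero_iff]
  simp only [Int.ModEq] at h₁
  omega

theorem exists_conj_mem_of_finite (hℓ : IsTreeLength K ℓ) {H : Subgroup Γ}
    (hH : (H : Set Γ).Finite) : ∃ x, ∀ h ∈ H, x * h * x⁻¹ ∈ K := by
  obtain ⟨m, hm⟩ := hℓ.exists_len_conj_le_one hH
  refine ⟨m⁻¹, fun h hh => ?_⟩
  rw [inv_inv]
  refine hℓ.mem_of_len_le_one_of_len_mul_self_le_one (hm h hh) ?_
  rw [show m⁻¹ * h * m * (m⁻¹ * h * m) = m⁻¹ * (h * h) * m by group]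
  exact hm _ (H.mul_mem hh hh)

end IsTreeLength

namespace HNNExtension

open NormalWord

variable {G : Type*} [Group G] {A B : Subgroup G} {φ : A ≃* B}

/-- The number of occurrences of `t` in any reduced word for `x` (well defined by Britton's
lemma). -/
noncomputable def length (φ : A ≃* B) (x : HNNExtension G A B φ) : ℕ :=
  (NormalWord.equiv φ (Classical.arbitrary (TransversalPair G A B)) x).toList.length

theorem exists_reducedWord_prod_eq (x : HNNExtension G A B φ) :
    ∃ w : ReducedWord G A B, w.prod φ = x :=
  ⟨_, (NormalWord.equiv φ (Classical.arbitrary (TransversalPair G A B))).symm_apply_apply x⟩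

theorem length_prod (w : ReducedWord G A B) : length φ (w.prod φ) = w.toList.length := by
  have h := ReducedWord.map_fst_eq_and_of_prod_eq φ
    ((NormalWord.equiv φ (Classical.arbitrary (TransversalPair G A B))).symm_apply_apply
      (w.prod φ))
  simpa [length] using congrArg List.length h.1

theorem length_of_mul (g : G) (x : HNNExtension G A B φ) : length φ (of g * x) = length φ x := by
  obtain ⟨w, rfl⟩ := exists_reducedWord_prod_eq x
  have : (⟨g * w.head, w.toList, w.chain⟩ : ReducedWord G A B).prod φ = of g * w.prod φ := by
    simp [ReducedWord.prod, mul_assoc]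
  rw [← this, length_prod, length_prod]

theorem length_eq_zero_iff {x : HNNExtension G A B φ} :
    length φ x = 0 ↔ x ∈ (of : G →* HNNExtension G A B φ).range := by
  constructor
  · obtain ⟨w, rfl⟩ := exists_reducedWord_prod_eq x
    rw [length_prod, List.length_eq_zero_iff]
    intro h
    exact ⟨w.head, by simp [ReducedWord.prod, h]⟩
  · rintro ⟨g, rfl⟩
    simpa [ReducedWord.prod] using length_prod (φ := φ) ⟨g, [], List.isChain_nil⟩

theorem zpow_t_mul_of_mul_zpow_t_neg_mem_range {u : ℤˣ} {a : G} (ha : a ∈ toSubgroup A B u) :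
    t ^ (u : ℤ) * of a * t ^ (-(u : ℤ)) ∈ (of : G →* HNNExtension G A B φ).range := by
  rcases Int.units_eq_one_or u with rfl | rfl
  · exact ⟨φ ⟨a, ha⟩, by simpa using equiv_eq_conj (φ := φ) ⟨a, ha⟩⟩
  · exact ⟨φ.symm ⟨a, ha⟩, by simpa using equiv_symm_eq_conj (φ := φ) ⟨a, ha⟩⟩

theorem length_zpow_t_mul_prod {u : ℤˣ} {c : ReducedWord G A B}
    (hc : ∀ q ∈ c.toList.head?, c.head ∈ toSubgroup A B u → u = q.1) :
    length φ (t ^ (u : ℤ) * c.prod φ) = c.toList.length + 1 := by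
  have : (⟨1, (u, c.head) :: c.toList, List.isChain_cons.2 ⟨hc, c.chain⟩⟩ :
      ReducedWord G A B).prod φ = t ^ (u : ℤ) * c.prod φ := by
    simp [ReducedWord.prod, mul_assoc]
  rw [← this, length_prod, List.length_cons]

theorem length_zpow_t_mul_prod_add_one {u : ℤˣ} {c : ReducedWord G A B} {q : ℤˣ × G}
    (hq : q ∈ c.toList.head?) (hq₁ : q.1 = -u) (hc : c.head ∈ toSubgroup A B u) :
    length φ (t ^ (u : ℤ) * c.prod φ) + 1 = c.toList.length := by
  obtain ⟨L, hL⟩ := List.head?_eq_some_iff.1 hq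
  obtain ⟨g', hg'⟩ := zpow_t_mul_of_mul_zpow_t_neg_mem_range (φ := φ) hc
  have hch : L.IsChain _ := (hL ▸ c.chain).tail
  have : t ^ (u : ℤ) * c.prod φ = of g' * (⟨q.2, L, hch⟩ : ReducedWord G A B).prod φ := by
    rw [hg']
    simp [ReducedWord.prod, hL, hq₁, mul_assoc]
  rw [this, length_of_mul, length_prod, hL, List.length_cons]

theorem exists_mem_head?_of_length_zpow_t_mul_prod_le {u : ℤˣ} {c : ReducedWord G A B}
    (h : length φ (t ^ (u : ℤ) * c.prod φ) ≤ c.toList.length) :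
    ∃ q ∈ c.toList.head?, q.1 = -u ∧ c.head ∈ toSubgroup A B u := by
  by_contra! hc
  have := length_zpow_t_mul_prod (φ := φ) (u := u) (c := c) fun q hq hmem => by
    by_contra hne
    exact hc q hq (by rw [Int.units_ne_iff_eq_neg.1 (Ne.symm hne)]) hmem
  omega

theorem length_zpow_t_mul_le (u : ℤˣ) (x : HNNExtension G A B φ) :
    length φ (t ^ (u : ℤ) * x) ≤ length φ x + 1 := by
  obtain ⟨c, rfl⟩ := exists_reducedWord_prod_eq x
  by_cases hc : ∀ q ∈ c.toList.head?, c.head ∈ toSubgroup A B u → u = q.1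
  · rw [length_zpow_t_mul_prod hc, length_prod]
  · push Not at hc
    obtain ⟨q, hq, hmem, hne⟩ := hc
    have := length_zpow_t_mul_prod_add_one (φ := φ) hq (Int.units_ne_iff_eq_neg.1 hne.symm) hmem
    rw [length_prod]
    omega

@[elab_as_elim]
theorem length_induction {motive : HNNExtension G A B φ → Prop} (x : HNNExtension G A B φ)
    (of : ∀ g, motive (of g))
    (cons : ∀ (a : G) (u : ℤˣ) (x : HNNExtension G A B φ), motive x →
      length φ (HNNExtension.of a * t ^ (u : ℤ) * x) = length φ x + 1 →
      motive (HNNExtension.of a * t ^ (u : ℤ) * x)) :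
    motive x := by
  obtain ⟨⟨h, L, ch⟩, rfl⟩ := exists_reducedWord_prod_eq x
  induction L generalizing h with
  | nil => simpa [ReducedWord.prod] using of h
  | cons p L ih =>
    have e : (⟨h, p :: L, ch⟩ : ReducedWord G A B).prod φ =
        HNNExtension.of h * t ^ (p.1 : ℤ) * (⟨p.2, L, ch.tail⟩ : ReducedWord G A B).prod φ := by
      simp [ReducedWord.prod, mul_assoc]
    rw [e]
    refine cons _ _ _ (ih p.2 ch.tail) ?_
    rw [← e, length_prod, length_prod, List.length_cons]

theorem length_of_mul_zpow_t (a : G) (u : ℤˣ) : length φ (of a * t ^ (u : ℤ)) = 1 := by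
  simpa [ReducedWord.prod, length_of_mul] using
    length_zpow_t_mul_prod (φ := φ) (u := u) (c := ReducedWord.empty G A B) (by simp)

theorem length_mul_le (x y : HNNExtension G A B φ) :
    length φ (x * y) ≤ length φ x + length φ y := by
  induction x using length_induction with
  | of g => exact (length_of_mul g y).le.trans (Nat.le_add_left _ _)
  | cons a u x ih hx =>
    rw [mul_assoc, mul_assoc, length_of_mul, hx]
    have := length_zpow_t_mul_le u (x * y)
    omega

theorem length_inv (x : HNNExtension G A B φ) : length φ x⁻¹ = length φ x := by
  suffices h : ∀ x : HNNExtension G A B φ, length φ x⁻¹ ≤ length φ x from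
    le_antisymm (h x) (by simpa using h x⁻¹)
  intro x
  induction x using length_induction with
  | of g => exact (length_eq_zero_iff.2 ⟨g⁻¹, map_inv of g⟩).trans_le (Nat.zero_le _)
  | cons a u x ih hx =>
    have e : (of a * t ^ (u : ℤ) * x)⁻¹ = x⁻¹ * (t ^ ((-u : ℤˣ) : ℤ) * of a⁻¹) := by
      simp [mul_assoc]
    have := length_zpow_t_mul_le (-u) (of a⁻¹ : HNNExtension G A B φ)
    have := length_mul_le x⁻¹ (t ^ ((-u : ℤˣ) : ℤ) * of a⁻¹)
    rw [e, hx]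
    rw [length_eq_zero_iff.2 ⟨a⁻¹, rfl⟩] at *
    omega

theorem exists_length_eq_one_and_length_inv_mul_add_one {x : HNNExtension G A B φ}
    (hx : length φ x ≠ 0) : ∃ s, length φ s = 1 ∧ length φ (s⁻¹ * x) + 1 = length φ x := by
  induction x using length_induction with
  | of g => exact absurd (length_eq_zero_iff.2 ⟨g, rfl⟩) hx
  | cons a u x _ hlen =>
    refine ⟨of a * t ^ (u : ℤ), length_of_mul_zpow_t a u, ?_⟩
    rw [inv_mul_cancel_left, hlen]

theorem exists_eq_of_length_eq_one {s : HNNExtension G A B φ} (hs : length φ s = 1) :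
    ∃ (a : G) (u : ℤˣ) (b : G), s = of a * t ^ (u : ℤ) * of b := by
  induction s using length_induction with
  | of g => simp [length_eq_zero_iff.2 ⟨g, rfl⟩] at hs
  | cons a u x _ hlen =>
    obtain ⟨b, rfl⟩ := length_eq_zero_iff.1 (by omega : length φ x = 0)
    exact ⟨a, u, b, rfl⟩

theorem exists_mem_head?_of_length_inv_mul_lt {a b : G} {u : ℤˣ} {c : ReducedWord G A B}
    (h : length φ ((of a * t ^ (u : ℤ) * of b)⁻¹ * c.prod φ) < c.toList.length) :
    ∃ q ∈ c.toList.head?, q.1 = u ∧ a⁻¹ * c.head ∈ toSubgroup A B (-u) := by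
  have e : (of a * t ^ (u : ℤ) * of b)⁻¹ * c.prod φ =
      of b⁻¹ * (t ^ ((-u : ℤˣ) : ℤ) * (⟨a⁻¹ * c.head, c.toList, c.chain⟩ :
        ReducedWord G A B).prod φ) := by
    simp [ReducedWord.prod, mul_assoc]
  rw [e, length_of_mul] at h
  simpa using exists_mem_head?_of_length_zpow_t_mul_prod_le h.le

theorem inv_mul_mem_range_of_length_inv_mul_lt {s s' x : HNNExtension G A B φ}
    (hs : length φ s = 1) (hs' : length φ s' = 1) (hsx : length φ (s⁻¹ * x) < length φ x)
    (hs'x : length φ (s'⁻¹ * x) < length φ x) :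
    s⁻¹ * s' ∈ (of : G →* HNNExtension G A B φ).range := by
  obtain ⟨a, u, b, rfl⟩ := exists_eq_of_length_eq_one hs
  obtain ⟨a', u', b', rfl⟩ := exists_eq_of_length_eq_one hs'
  obtain ⟨c, rfl⟩ := exists_reducedWord_prod_eq x
  rw [length_prod] at hsx hs'x
  obtain ⟨q, hq, rfl, hmem⟩ := exists_mem_head?_of_length_inv_mul_lt hsx
  obtain ⟨q', hq', rfl, hmem'⟩ := exists_mem_head?_of_length_inv_mul_lt hs'x
  obtain rfl := Option.mem_unique hq hq'
  have hconj := zpow_t_mul_of_mul_zpow_t_neg_mem_range (φ := φ)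
    (mul_mem hmem (inv_mem hmem'))
  have e : ((of a * t ^ (q.1 : ℤ) * of b)⁻¹ * (of a' * t ^ (q.1 : ℤ) * of b') :
      HNNExtension G A B φ) =
      (of b)⁻¹ * (t ^ ((-q.1 : ℤˣ) : ℤ) * of (a⁻¹ * c.head * (a'⁻¹ * c.head)⁻¹) *
        t ^ (-((-q.1 : ℤˣ) : ℤ))) * of b' := by
    simp [mul_assoc]
  rw [e]
  exact mul_mem (mul_mem (inv_mem ⟨b, rfl⟩) hconj) ⟨b', rfl⟩

def tExponentSum : HNNExtension G A B φ →* Multiplicative ℤ :=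
  lift 1 (ofAdd 1) fun _ => by simp

theorem toAdd_tExponentSum_of_mul_zpow_t_mul (a : G) (u : ℤˣ) (x : HNNExtension G A B φ) :
    toAdd (tExponentSum (of a * t ^ (u : ℤ) * x)) = u + toAdd (tExponentSum x) := by
  simp [tExponentSum]

theorem length_modEq_tExponentSum (x : HNNExtension G A B φ) :
    (length φ x : ℤ) ≡ toAdd (tExponentSum x) [ZMOD 2] := by
  induction x using length_induction with
  | of g => simp [tExponentSum, length_eq_zero_iff.2 ⟨g, rfl⟩]
  | cons a u x ih hlen =>
    rw [hlen, toAdd_tExponentSum_of_mul_zpow_t_mul]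
    rcases Int.units_eq_one_or u with rfl | rfl <;>
      simp only [Int.ModEq, Units.val_one, Units.val_neg] at ih ⊢ <;> push_cast <;> omega

theorem isTreeLength_length (φ : A ≃* B) :
    IsTreeLength (of : G →* HNNExtension G A B φ).range (length φ) where
  eq_zero_iff _ := length_eq_zero_iff
  inv := length_inv
  mul_le := length_mul_le
  exists_step _ := exists_length_eq_one_and_length_inv_mul_add_one
  step_unique _ _ _ := inv_mul_mem_range_of_length_inv_mul_lt
  exists_parity := ⟨tExponentSum, fun _ ⟨g, hg⟩ => by simp [← hg, tExponentSum],
    length_modEq_tExponentSum⟩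

end HNNExtension

/-- Every finite subgroup of an HNN extension is conjugate to a subgroup of (the canonical
image of) its base group: if `H` is a finite subgroup of the HNN extension of `G` relative to
an isomorphism `φ : A ≃* B` between subgroups `A, B ≤ G`, then there is an `x` in the HNN
extension with `x H x⁻¹` contained in the image of `G`. -/
theorem finite_subgroup_of_HNNExtension_conjugate_into_base
    (G : Type*) [Group G] (A B : Subgroup G) (φ : A ≃* B)
    (H : Subgroup (HNNExtension G A B φ))
    (hH : (H : Set (HNNExtension G A B φ)).Finite) :
    ∃ x : HNNExtension G A B φ, ∀ h ∈ H,
      x * h * x⁻¹ ∈ (HNNExtension.of : G →* HNNExtension G A B φ).range :=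
  (HNNExtension.isTreeLength_length φ).exists_conj_mem_of_finite hH
end

section
/- There exist constants C₁, C₂ > 0 such that for every element g of the Heisenberg group ℋ₃(ℤ) corresponding to the triple (x, y, z), one has C₁·(|x| + |y| + √|z|) ≤ d_A(g) ≤ C₂·(|x| + |y| + √|z|), where A = {s, p, q} and d_A(g) is the word length of g with respect to A. -/
namespace CAG

/-- The convolution `w₁ ⊗ w₂` of two words, over the padded alphabet
`(Σ ∪ {⋄})²`, modelled as `Option α × Option α` where `none` is the padding symbol `⋄`. -/
def conv {α : Type*} : List α → List α → List (Option α × Option α)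
  | [], [] => []
  | a :: as, [] => (some a, none) :: conv as []
  | [], b :: bs => (none, some b) :: conv [] bs
  | a :: as, b :: bs => (some a, some b) :: conv as bs

/-- A binary relation on words is regular if the language of convolutions of its pairs
is a regular language. -/
def IsRegularRel {α : Type*} (R : Set (List α × List α)) : Prop :=
  Language.IsRegular {w | ∃ p ∈ R, w = conv p.1 p.2}

variable {G : Type*} [Group G]

/-- The alphabet `S = A ∪ A⁻¹` associated to a generating set `A ⊆ G`. -/
def Alph (A : Set G) : Type _ := {x : G // x ∈ A ∪ A⁻¹}

/-- The canonical evaluation map `π : S* → G`. -/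
def eval (A : Set G) (w : List (Alph A)) : G := (w.map Subtype.val).prod

/-- The word length `d_A(g)` of `g` with respect to the generating set `A`. -/
noncomputable def wordLength (A : Set G) (g : G) : ℕ :=
  sInf {n | ∃ w : List (Alph A), eval A w = g ∧ w.length = n}

/-- The distance `d_A(g₁, g₂)` in the Cayley graph of `G` with respect to `A`. -/
noncomputable def cayleyDist (A : Set G) (g₁ g₂ : G) : ℕ := wordLength A (g₁⁻¹ * g₂)

/-- `ψ : L → G` is a Cayley automatic representation of `G` (w.r.t. the
generating set `A`): `L ⊆ S*` is regular, `ψ` is a bijection from `L` onto `G`, and for every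
`a ∈ A` the relation `R_a = {(ψ⁻¹(g), ψ⁻¹(g·a)) : g ∈ G}` is regular. -/
def IsCayleyAutomaticRep (A : Set G) (L : Language (Alph A)) (ψ : List (Alph A) → G) : Prop :=
  Language.IsRegular L ∧ Set.BijOn ψ L Set.univ ∧
    ∀ a ∈ A, IsRegularRel {p : List (Alph A) × List (Alph A) |
      p.1 ∈ L ∧ p.2 ∈ L ∧ ψ p.2 = ψ p.1 * a}

/-- `G` is Cayley automatic with respect to the generating set `A`. -/
def IsCayleyAutomatic (A : Set G) : Prop :=
  ∃ (L : Language (Alph A)) (ψ : List (Alph A) → G), IsCayleyAutomaticRep A L ψ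

/-- `G` is automatic (in the sense of Thurston) with respect to the generating set `A`:
there is a regular language `L ⊆ S*` on which the canonical evaluation map `π` is a bijection
onto `G` and all the relations `R_a`, `a ∈ A`, are regular. -/
def IsAutomatic (A : Set G) : Prop :=
  ∃ L : Language (Alph A), IsCayleyAutomaticRep A L (eval A)

/-- The family `𝔉` of non-decreasing, non-negative real valued functions defined on a
final segment `[Q, ∞)` of `ℕ` (values below `Q` are irrelevant junk values). -/
structure FFun where
  Q : ℕ
  toFun : ℕ → ℝ
  nonneg : ∀ n, Q ≤ n → 0 ≤ toFun n
  mono : ∀ m n, Q ≤ m → m ≤ n → toFun m ≤ toFun n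

/-- `h ⪯ f` : there are positive integers `K, M, N`, with `[N,∞)` contained in the domains of
`h` and `f`, such that `h(n) ≤ K·f(M·n)` for all `n ≥ N`. -/
def FFun.Preceq (h f : FFun) : Prop :=
  ∃ K M N : ℕ, 0 < K ∧ 0 < M ∧ 0 < N ∧ h.Q ≤ N ∧ f.Q ≤ N ∧
    ∀ n, N ≤ n → h.toFun n ≤ K * f.toFun (M * n)

/-- `h ≍ f` iff `h ⪯ f` and `f ⪯ h`. -/
def FFun.Equiv (h f : FFun) : Prop := h.Preceq f ∧ f.Preceq h

/-- `h ≺ f` iff `h ⪯ f` and not `h ≍ f`. -/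
def FFun.Prec (h f : FFun) : Prop := h.Preceq f ∧ ¬ h.Equiv f

/-- `G ∈ ℬ_f` with respect to the generating set `A`: there is a Cayley automatic
representation `ψ : L → G` such that the function
`h(n) = max{d_A(π(w), ψ(w)) : w ∈ L, |w| ≤ n}` satisfies `h ⪯ f`
(stated equivalently: for some positive `K, M, N` with `N ≥ Q_f`, every `w ∈ L` with `|w| ≤ n`
and `n ≥ N` satisfies `d_A(π(w), ψ(w)) ≤ K·f(M·n)`). -/
def InB (A : Set G) (f : FFun) : Prop :=
  ∃ (L : Language (Alph A)) (ψ : List (Alph A) → G),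
    IsCayleyAutomaticRep A L ψ ∧
    ∃ K M N : ℕ, 0 < K ∧ 0 < M ∧ 0 < N ∧ f.Q ≤ N ∧
      ∀ n, N ≤ n → ∀ w ∈ L, w.length ≤ n →
        (cayleyDist A (eval A w) (ψ w) : ℝ) ≤ K * f.toFun (M * n)

/-- The identity function `𝔦(n) = n` as an element of `𝔉`. -/
def identF : FFun where
  Q := 1
  toFun n := n
  nonneg n _ := by positivity
  mono m n _ h := by simpa using (Nat.cast_le (α := ℝ)).mpr h

/-- The exponential function `𝔢(n) = exp n` as an element of `𝔉`. -/
noncomputable def expF : FFun where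
  Q := 1
  toFun n := Real.exp n
  nonneg n _ := (Real.exp_pos n).le
  mono m n _ h := Real.exp_le_exp.mpr (by exact_mod_cast h)

end CAG
namespace CAG

/-- The Heisenberg group `ℋ₃(ℤ)` of `3×3` upper unitriangular integer matrices, an element
being identified with the triple `(x, y, z)` of its upper-right entries, with multiplication
`(x,y,z)·(x',y',z') = (x+x', y+y', z+z'+x·y')`. -/
@[ext] structure Heis where
  x : ℤ
  y : ℤ
  z : ℤ

instance : Mul Heis := ⟨fun g h => ⟨g.x + h.x, g.y + h.y, g.z + h.z + g.x * h.y⟩⟩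
instance : One Heis := ⟨⟨0, 0, 0⟩⟩
instance : Inv Heis := ⟨fun g => ⟨-g.x, -g.y, -g.z + g.x * g.y⟩⟩

lemma Heis.mul_def (g h : Heis) :
    g * h = ⟨g.x + h.x, g.y + h.y, g.z + h.z + g.x * h.y⟩ := rfl
lemma Heis.one_def : (1 : Heis) = ⟨0, 0, 0⟩ := rfl
lemma Heis.inv_def (g : Heis) : g⁻¹ = ⟨-g.x, -g.y, -g.z + g.x * g.y⟩ := rfl

instance : Group Heis where
  mul_assoc a b c := by
    simp only [Heis.mul_def]
    ext <;> dsimp <;> ring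
  one_mul a := by simp only [Heis.mul_def, Heis.one_def]; ext <;> dsimp <;> ring
  mul_one a := by simp only [Heis.mul_def, Heis.one_def]; ext <;> dsimp <;> ring
  inv_mul_cancel a := by
    simp only [Heis.mul_def, Heis.inv_def, Heis.one_def]
    ext <;> dsimp <;> ring

/-- The generator `s = (1,0,0)` of `ℋ₃(ℤ)`. -/
def Heis.s : Heis := ⟨1, 0, 0⟩
/-- The generator `p = (0,1,0)` of `ℋ₃(ℤ)`. -/
def Heis.p : Heis := ⟨0, 1, 0⟩
/-- The generator `q = (0,0,1)` of `ℋ₃(ℤ)`. -/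
def Heis.q : Heis := ⟨0, 0, 1⟩

end CAG

/-!
Lower bound: every letter lies in the box `|x| ≤ 1, |y| ≤ 1, |z| ≤ 1`, and a product of elements
of the boxes `|x|, |y| ≤ m, |z| ≤ m²` and `|x|, |y| ≤ n, |z| ≤ n²` lies in the box of size `m + n`
because `|z + z' + x y'| ≤ m² + n² + m n`; so an element of word length `n` lies in the box of
size `n`. Upper bound: `g = pʸ · (0,0,z) · sˣ`, and with `k = ⌊√|z|⌋` the central element
`(0,0,z)` is the commutator `⁅sᵏ, p^(±k)⁆ = (0,0,±k²)` times a power of `q` of exponent at most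
`2k` in absolute value, which costs `6k` letters in all.
-/

namespace CAG

section WordBall

variable {G : Type*} [Group G]

def wordBall (A : Set G) (n : ℕ) : Set G :=
  {g | ∃ w : List (Alph A), eval A w = g ∧ w.length ≤ n}

variable {A : Set G}

theorem eval_cons (a : Alph A) (w : List (Alph A)) : eval A (a :: w) = a.1 * eval A w :=
  List.prod_cons

theorem eval_append (v w : List (Alph A)) : eval A (v ++ w) = eval A v * eval A w :=
  (congrArg List.prod (List.map_append ..)).trans List.prod_append

theorem one_mem_wordBall (n : ℕ) : (1 : G) ∈ wordBall A n :=
  ⟨[], rfl, Nat.zero_le n⟩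

theorem mem_wordBall_one_of_mem {a : G} (ha : a ∈ A ∪ A⁻¹) : a ∈ wordBall A 1 :=
  ⟨[⟨a, ha⟩], mul_one a, le_rfl⟩

theorem mul_mem_wordBall {g h : G} {m n : ℕ} (hg : g ∈ wordBall A m) (hh : h ∈ wordBall A n) :
    g * h ∈ wordBall A (m + n) := by
  obtain ⟨v, rfl, hv⟩ := hg
  obtain ⟨w, rfl, hw⟩ := hh
  refine ⟨v ++ w, ?_, ?_⟩
  · exact eval_append v w
  · rw [List.length_append]
    omega

theorem wordBall_mono {m n : ℕ} (h : m ≤ n) : wordBall A m ⊆ wordBall A n :=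
  fun _ ⟨w, hw, hm⟩ => ⟨w, hw, hm.trans h⟩

theorem pow_mem_wordBall {a : G} (ha : a ∈ A ∪ A⁻¹) (n : ℕ) : a ^ n ∈ wordBall A n := by
  induction n with
  | zero => exact (pow_zero a).symm ▸ one_mem_wordBall 0
  | succ n ih => exact (pow_succ a n).symm ▸ mul_mem_wordBall ih (mem_wordBall_one_of_mem ha)

theorem zpow_mem_wordBall {a : G} (ha : a ∈ A) (k : ℤ) : a ^ k ∈ wordBall A k.natAbs := by
  obtain ⟨n, rfl | rfl⟩ := Int.eq_nat_or_neg k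
  · exact (zpow_natCast a n).symm ▸ pow_mem_wordBall (Or.inl ha) n
  · rw [zpow_neg, zpow_natCast, ← inv_pow, Int.natAbs_neg, Int.natAbs_natCast]
    exact pow_mem_wordBall (Or.inr (Set.inv_mem_inv.2 ha)) n

theorem wordLength_le_of_mem_wordBall {g : G} {n : ℕ} (hg : g ∈ wordBall A n) :
    wordLength A g ≤ n := by
  obtain ⟨w, hw, hn⟩ := hg
  exact (Nat.sInf_le ⟨w, hw, rfl⟩ : wordLength A g ≤ w.length).trans hn

theorem mem_wordBall_wordLength {g : G} {n : ℕ} (hg : g ∈ wordBall A n) :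
    g ∈ wordBall A (wordLength A g) := by
  obtain ⟨w, hw, -⟩ := hg
  obtain ⟨v, hv, hlen⟩ := Nat.sInf_mem (⟨_, w, hw, rfl⟩ :
    {n | ∃ w : List (Alph A), eval A w = g ∧ w.length = n}.Nonempty)
  exact ⟨v, hv, hlen.le⟩

end WordBall

namespace Heis

open scoped commutatorElement

abbrev gens : Set Heis := {s, p, q}

theorem zpow_of_mul_eq_zero {u v w : ℤ} (huv : u * v = 0) (k : ℤ) :
    (⟨u, v, w⟩ : Heis) ^ k = ⟨k * u, k * v, k * w⟩ := by
  induction k using Int.induction_on with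
  | zero => simp [one_def]
  | succ n ih =>
    rw [zpow_add_one, ih, mul_def]
    ext
    · ring
    · ring
    · linear_combination (n : ℤ) * huv
  | pred n ih =>
    rw [zpow_sub_one, ih, mul_def, inv_def]
    ext
    · ring
    · ring
    · linear_combination ((n : ℤ) + 1) * huv

theorem s_zpow (k : ℤ) : s ^ k = ⟨k, 0, 0⟩ := by
  simpa [s] using zpow_of_mul_eq_zero (w := 0) (mul_zero 1) k

theorem p_zpow (k : ℤ) : p ^ k = ⟨0, k, 0⟩ := by
  simpa [p] using zpow_of_mul_eq_zero (w := 0) (zero_mul 1) k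

theorem q_zpow (k : ℤ) : q ^ k = ⟨0, 0, k⟩ := by
  simpa [q] using zpow_of_mul_eq_zero (w := 1) (zero_mul 0) k

theorem commutatorElement_s_zpow_p_zpow (a b : ℤ) : ⁅s ^ a, p ^ b⁆ = ⟨0, 0, a * b⟩ := by
  rw [commutatorElement_def, s_zpow, p_zpow]
  ext <;> simp [mul_def, inv_def]

theorem commutatorElement_s_zpow_p_zpow_mem_wordBall (a b : ℤ) :
    ⁅s ^ a, p ^ b⁆ ∈ wordBall gens (2 * a.natAbs + 2 * b.natAbs) := by
  have hs : s ∈ gens := by simp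
  have hp : p ∈ gens := by simp
  rw [commutatorElement_def, ← zpow_neg, ← zpow_neg]
  convert mul_mem_wordBall (mul_mem_wordBall (mul_mem_wordBall (zpow_mem_wordBall hs a)
    (zpow_mem_wordBall hp b)) (zpow_mem_wordBall hs (-a))) (zpow_mem_wordBall hp (-b)) using 2
  simp only [Int.natAbs_neg]
  ring

theorem mk_mul_add_mem_wordBall (a b r : ℤ) :
    (⟨0, 0, a * b + r⟩ : Heis) ∈ wordBall gens (2 * a.natAbs + 2 * b.natAbs + r.natAbs) := by
  have h : (⟨0, 0, a * b + r⟩ : Heis) = ⁅s ^ a, p ^ b⁆ * q ^ r := by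
    rw [commutatorElement_s_zpow_p_zpow, q_zpow, mul_def]
    ext <;> simp
  exact h ▸ mul_mem_wordBall (commutatorElement_s_zpow_p_zpow_mem_wordBall a b)
    (zpow_mem_wordBall (by simp) r)

theorem center_mem_wordBall (z : ℤ) :
    (⟨0, 0, z⟩ : Heis) ∈ wordBall gens (6 * z.natAbs.sqrt) := by
  have hlo := Nat.sqrt_le z.natAbs
  have hhi := Nat.lt_succ_sqrt z.natAbs
  generalize z.natAbs.sqrt = k at hlo hhi ⊢
  have hlo' : (k * k : ℤ) ≤ z.natAbs := by exact_mod_cast hlo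
  have hhi' : (z.natAbs : ℤ) < k * k + 2 * k + 1 := by
    exact_mod_cast (by nlinarith [hhi] : z.natAbs < k * k + 2 * k + 1)
  obtain ⟨b, r, rfl, hb, hr⟩ :
      ∃ b r : ℤ, z = k * b + r ∧ b.natAbs = k ∧ r.natAbs ≤ 2 * k := by
    rcases le_or_gt 0 z with hz | hz
    · exact ⟨k, z - k * k, by ring, Int.natAbs_natCast k, by omega⟩
    · exact ⟨-k, z + k * k, by ring, by simp, by omega⟩
  refine wordBall_mono ?_ (mk_mul_add_mem_wordBall k b r)
  omega

theorem mem_wordBall (g : Heis) :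
    g ∈ wordBall gens (g.y.natAbs + 6 * g.z.natAbs.sqrt + g.x.natAbs) := by
  have h : g = p ^ g.y * ⟨0, 0, g.z⟩ * s ^ g.x := by
    rw [p_zpow, s_zpow]
    ext <;> simp [mul_def]
  have hs : s ∈ gens := by simp
  have hp : p ∈ gens := by simp
  have hg := mul_mem_wordBall (mul_mem_wordBall (zpow_mem_wordBall hp g.y)
    (center_mem_wordBall g.z)) (zpow_mem_wordBall hs g.x)
  rwa [← h] at hg

def InBox (n : ℕ) (g : Heis) : Prop :=
  |g.x| ≤ n ∧ |g.y| ≤ n ∧ |g.z| ≤ n ^ 2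

theorem InBox.mul {m n : ℕ} {g h : Heis} (hg : InBox m g) (hh : InBox n h) :
    InBox (m + n) (g * h) := by
  obtain ⟨hgx, hgy, hgz⟩ := hg
  obtain ⟨hhx, hhy, hhz⟩ := hh
  have hxy : |g.x * h.y| ≤ m * n := by
    rw [abs_mul]
    exact mul_le_mul hgx hhy (abs_nonneg _) (Nat.cast_nonneg m)
  simp only [InBox, mul_def, Nat.cast_add]
  refine ⟨(abs_add_le _ _).trans (by linarith), (abs_add_le _ _).trans (by linarith), ?_⟩
  linarith [abs_add_le (g.z + h.z) (g.x * h.y), abs_add_le g.z h.z,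
    mul_nonneg (Int.natCast_nonneg m) (Int.natCast_nonneg n)]

theorem inBox_one_of_mem {a : Heis} (ha : a ∈ gens ∪ gens⁻¹) : InBox 1 a := by
  simp only [Set.mem_union, Set.mem_inv, Set.mem_insert_iff, Set.mem_singleton_iff] at ha
  rcases ha with (rfl | rfl | rfl) | (h | h | h)
  all_goals (try rw [← inv_inv a, h]); simp [InBox, inv_def, s, p, q]

theorem inBox_of_mem_wordBall {g : Heis} {n : ℕ} (hg : g ∈ wordBall gens n) : InBox n g := by
  obtain ⟨w, rfl, hw⟩ := hg
  induction w generalizing n with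
  | nil =>
    show InBox n 1
    simp [InBox, one_def]
  | cons a w ih =>
    obtain ⟨n, rfl⟩ : ∃ k, n = k + 1 := Nat.exists_eq_add_one.2 (by simp at hw; omega)
    rw [eval_cons, add_comm]
    exact (inBox_one_of_mem a.2).mul (ih (by simpa using hw))

theorem InBox.abs_add_abs_add_sqrt_abs_le {n : ℕ} {g : Heis} (hg : InBox n g) :
    |(g.x : ℝ)| + |(g.y : ℝ)| + √|(g.z : ℝ)| ≤ 3 * n := by
  obtain ⟨hx, hy, hz⟩ := hg
  have hx' : |(g.x : ℝ)| ≤ n := by exact_mod_cast hx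
  have hy' : |(g.y : ℝ)| ≤ n := by exact_mod_cast hy
  have hz' : √|(g.z : ℝ)| ≤ n := by
    rw [← Real.sqrt_sq (Nat.cast_nonneg n)]
    exact Real.sqrt_le_sqrt (by exact_mod_cast hz)
  linarith

end Heis

theorem natAbs_add_sqrt_natAbs_le (x y z : ℤ) :
    ((y.natAbs + 6 * z.natAbs.sqrt + x.natAbs : ℕ) : ℝ) ≤
      6 * (|(x : ℝ)| + |(y : ℝ)| + √|(z : ℝ)|) := by
  have hz : (z.natAbs.sqrt : ℝ) ≤ √|(z : ℝ)| := by
    simpa [Nat.cast_natAbs] using Real.nat_sqrt_le_real_sqrt (a := z.natAbs)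
  push_cast [Nat.cast_natAbs, Int.cast_abs]
  linarith [abs_nonneg (x : ℝ), abs_nonneg (y : ℝ)]

end CAG

open CAG in
/-- Metric estimates for the Heisenberg group `ℋ₃(ℤ)`: there are constants `C₁, C₂ > 0` such
that for every element `g` corresponding to the triple `(x,y,z)`,
`C₁·(|x| + |y| + √|z|) ≤ d_A(g) ≤ C₂·(|x| + |y| + √|z|)` where `A = {s, p, q}`. -/
theorem heisenberg_metric_estimates :
    ∃ C₁ C₂ : ℝ, 0 < C₁ ∧ 0 < C₂ ∧
      ∀ g : Heis,
        C₁ * (|(g.x : ℝ)| + |(g.y : ℝ)| + Real.sqrt |(g.z : ℝ)|) ≤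
            (wordLength ({Heis.s, Heis.p, Heis.q} : Set Heis) g : ℝ) ∧
          (wordLength ({Heis.s, Heis.p, Heis.q} : Set Heis) g : ℝ) ≤
            C₂ * (|(g.x : ℝ)| + |(g.y : ℝ)| + Real.sqrt |(g.z : ℝ)|) := by
  refine ⟨1 / 3, 6, by norm_num, by norm_num, fun g => ⟨?_, ?_⟩⟩
  · have h := (Heis.inBox_of_mem_wordBall
      (mem_wordBall_wordLength (Heis.mem_wordBall g))).abs_add_abs_add_sqrt_abs_le
    linarith
  · exact (Nat.cast_le.2 (wordLength_le_of_mem_wordBall (Heis.mem_wordBall g))).trans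
      (natAbs_add_sqrt_natAbs_le g.x g.y g.z)
end
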